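/- Let n, r be positive integers and c, d integers, and let b = gcd(r, n). A vector x ∈ ℤ^r satisfies the coroot equations, namely (c−d)(x_i − x_r) ≡ 0 (mod n) for all 1 ≤ i ≤ r−1 and (c+(r−1)d)(x₁ + ⋯ + x_r) ≡ 0 (mod n), if and only if there exists an integer k such that B·x ≡ (k·n/b)·(1,...,1)^T (mod n), where B is the r×r matrix with diagonal entries c and off-diagonal entries d. -/
import Mathlib


theorem stmt_15 (n r : ℕ) (hn : 0 < n) (hr : 0 < r) (c d : ℤ)
    (B : Matrix (Fin r) (Fin r) ℤ)
    (hB : ∀ i j, B i j = if i = j then c else d)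
    (x : Fin r → ℤ) :
    ((∀ i : Fin r, i ≠ ⟨r - 1, by omega⟩ →
        (c - d) * (x i - x ⟨r - 1, by omega⟩) ≡ 0 [ZMOD (n : ℤ)]) ∧
      (c + (r - 1) * d) * (∑ i, x i) ≡ 0 [ZMOD (n : ℤ)]) ↔
    (∃ k : ℤ, ∀ i, B.mulVec x i ≡ k * ((n : ℤ) / (Nat.gcd r n : ℤ)) [ZMOD (n : ℤ)]) := by
  set L : Fin r := ⟨r - 1, by omega⟩ with hLdef
  set S : ℤ := ∑ i, x i with hSdef
  have hmv : ∀ i : Fin r, B.mulVec x i = (c - d) * x i + d * S := by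
    intro i
    simp only [Matrix.mulVec, dotProduct]
    have h1 : ∀ j : Fin r, B i j * x j =
        (if j = i then (c - d) * x j else 0) + d * x j := by
      intro j
      rw [hB]
      by_cases h : i = j
      · simp [h]; ring
      · simp [h, Ne.symm h]
    rw [Finset.sum_congr rfl fun j _ => h1 j, Finset.sum_add_distrib,
      Finset.sum_ite_eq' Finset.univ i, ← Finset.mul_sum]
    simp [hSdef]
  have hsum : ∑ i, B.mulVec x i = (c + ((r : ℤ) - 1) * d) * S := by
    simp only [hmv]
    rw [Finset.sum_add_distrib, ← Finset.mul_sum, Finset.sum_const, Finset.card_univ,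
      Fintype.card_fin, ← hSdef]
    ring
  have hb : 0 < Nat.gcd r n := Nat.gcd_pos_of_pos_right r hn
  have hbr : Nat.gcd r n ∣ r := Nat.gcd_dvd_left r n
  have hbn : Nat.gcd r n ∣ n := Nat.gcd_dvd_right r n
  have hcast : (n : ℤ) / (Nat.gcd r n : ℤ) = ((n / Nat.gcd r n : ℕ) : ℤ) :=
    (Int.natCast_div n (Nat.gcd r n)).symm
  have hnat : r * (n / Nat.gcd r n) = r / Nat.gcd r n * n := by
    calc r * (n / Nat.gcd r n) = (r / Nat.gcd r n * Nat.gcd r n) * (n / Nat.gcd r n) := by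
          rw [Nat.div_mul_cancel hbr]
      _ = r / Nat.gcd r n * (Nat.gcd r n * (n / Nat.gcd r n)) := by ring
      _ = r / Nat.gcd r n * n := by rw [Nat.mul_div_cancel' hbn]
  have hrn : (r : ℤ) * ((n / Nat.gcd r n : ℕ) : ℤ) = ((r / Nat.gcd r n : ℕ) : ℤ) * n := by
    exact_mod_cast hnat
  constructor
  · rintro ⟨h1, h2⟩
    have hdiff : ∀ i : Fin r, (n : ℤ) ∣ (B.mulVec x i - B.mulVec x L) := by
      intro i
      rw [hmv, hmv]
      have heq : (c - d) * x i + d * S - ((c - d) * x L + d * S)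
          = (c - d) * (x i - x L) := by ring
      rw [heq]
      by_cases h : i = L
      · simp [h]
      · exact Int.modEq_zero_iff_dvd.mp (h1 i h)
    have hsdvd : (n : ℤ) ∣ (∑ i, B.mulVec x i) - (r : ℤ) * B.mulVec x L := by
      have : (∑ i, B.mulVec x i) - (r : ℤ) * B.mulVec x L
          = ∑ i, (B.mulVec x i - B.mulVec x L) := by
        rw [Finset.sum_sub_distrib, Finset.sum_const, Finset.card_univ, Fintype.card_fin,
          nsmul_eq_mul]
      rw [this]
      exact Finset.dvd_sum fun i _ => hdiff i
    have htot : (n : ℤ) ∣ ∑ i, B.mulVec x i := by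
      rw [hsum]; exact Int.modEq_zero_iff_dvd.mp h2
    have hrv : (n : ℤ) ∣ (r : ℤ) * B.mulVec x L := by
      have h3 := dvd_sub htot hsdvd
      rwa [sub_sub_cancel] at h3
    have hng : (n : ℤ) = (Nat.gcd r n : ℤ) * ((n / Nat.gcd r n : ℕ) : ℤ) := by
      exact_mod_cast (Nat.mul_div_cancel' hbn).symm
    have hrg : (r : ℤ) = (Nat.gcd r n : ℤ) * ((r / Nat.gcd r n : ℕ) : ℤ) := by
      exact_mod_cast (Nat.mul_div_cancel' hbr).symm
    have hdvd2 : ((n / Nat.gcd r n : ℕ) : ℤ) ∣ ((r / Nat.gcd r n : ℕ) : ℤ) * B.mulVec x L := by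
      have hg0 : (Nat.gcd r n : ℤ) ≠ 0 := by exact_mod_cast hb.ne'
      rw [hng, hrg, mul_assoc] at hrv
      exact (mul_dvd_mul_iff_left hg0).mp hrv
    have hcop : IsCoprime ((n / Nat.gcd r n : ℕ) : ℤ) ((r / Nat.gcd r n : ℕ) : ℤ) :=
      Nat.isCoprime_iff_coprime.mpr (Nat.coprime_div_gcd_div_gcd hb).symm
    obtain ⟨k, hk⟩ := hcop.dvd_of_dvd_mul_left hdvd2
    refine ⟨k, fun i => ?_⟩
    rw [hcast]
    have h4 : B.mulVec x i ≡ B.mulVec x L [ZMOD (n : ℤ)] :=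
      (Int.modEq_iff_dvd.mpr (hdiff i)).symm
    rw [hk] at h4
    exact h4.trans (by rw [mul_comm])
  · rintro ⟨k, hk⟩
    constructor
    · intro i hi
      have h := (hk i).sub (hk L)
      rw [hmv, hmv] at h
      have heq : c - d + 0 = c - d := by ring
      have : (c - d) * x i + d * S - ((c - d) * x L + d * S)
          = (c - d) * (x i - x L) := by ring
      rw [this] at h
      simpa using h
    · have hs : (n : ℤ) ∣ (∑ i, B.mulVec x i) - (r : ℤ) * (k * ((n : ℤ) / (Nat.gcd r n : ℤ))) := by
        have heq : (∑ i, B.mulVec x i) - (r : ℤ) * (k * ((n : ℤ) / (Nat.gcd r n : ℤ)))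
            = ∑ i, (B.mulVec x i - k * ((n : ℤ) / (Nat.gcd r n : ℤ))) := by
          rw [Finset.sum_sub_distrib, Finset.sum_const, Finset.card_univ, Fintype.card_fin,
            nsmul_eq_mul]
        rw [heq]
        exact Finset.dvd_sum fun i _ => Int.modEq_iff_dvd.mp (hk i).symm
      have hz : (n : ℤ) ∣ (r : ℤ) * (k * ((n : ℤ) / (Nat.gcd r n : ℤ))) := by
        rw [hcast]
        exact ⟨((r / Nat.gcd r n : ℕ) : ℤ) * k, by
          rw [show (r : ℤ) * (k * ((n / Nat.gcd r n : ℕ) : ℤ))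
              = ((r : ℤ) * ((n / Nat.gcd r n : ℕ) : ℤ)) * k by ring, hrn]; ring⟩
      rw [← hsum]
      refine Int.modEq_zero_iff_dvd.mpr ?_
      have h5 := dvd_add hs hz
      rwa [sub_add_cancel] at h5
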